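/- Let τ = (1+√5)/2, σ = (1−√5)/2, and let α₁ = (−1,0,0), α₂ = ½(τ,1,σ), α₃ = (0,0,−1) be the simple roots of H₃ in ℝ³. Then the subgroup of the multiplicative group of the real quaternions generated by the two spinor generators R₁ = ι(α₁)·ι(α₂) and R₂ = ι(α₂)·ι(α₃) is exactly the 120-element set of icosians (the binary icosahedral group, i.e. the root system of H₄). -/

import Mathlib

/-! Twice an icosian has coordinates in the golden integers `ℤ[τ]`, `τ² = τ + 1`, so the icosians
can be handled exactly as elements `X` of `ℍ[ℤ[τ]]` standing for `X / 2`; the product of the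
icosians `X / 2` and `Y / 2` is `Z / 2` exactly when `X * Y = 2 • Z`. The 120 doubled icosians are
closed under right multiplication by the doubled spinor generators, and a finite set closed under
right multiplication by a unit is also closed under multiplication by its inverse; so the icosians
contain the generated group. Conversely, a breadth-first search from `1` reaches every icosian
within nine right multiplications by the generators. Both facts are finite computations in
`ℍ[ℤ[τ]]`. -/

noncomputable section

open scoped RealInnerProductSpace

/-- sign predicate: `a = ±1` -/
def pm (a : ℝ) : Prop := a = 1 ∨ a = -1

abbrev E3 := EuclideanSpace ℝ (Fin 3)

def vec3 (a b c : ℝ) : E3 := WithLp.toLp 2 ![a, b, c]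

/-- Reflection in the hyperplane orthogonal to `α`:
`λ ↦ λ − 2(⟪λ,α⟫/⟪α,α⟫)α`. -/
def sRefl (α x : E3) : E3 := x - (2 * (⟪x, α⟫ / ⟪α, α⟫)) • α

/-- The group of linear isometries of ℝ³ generated by the reflections `s_α`, `α ∈ S`. -/
def reflGroup (S : Set E3) : Subgroup (E3 ≃ₗᵢ[ℝ] E3) :=
  Subgroup.closure {g | ∃ α ∈ S, ∀ x, g x = sRefl α x}

/-- The orbit of the set `S` under the group generated by the reflections in elements of `S`. -/
def orbitOf (S : Set E3) : Set E3 :=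
  {x | ∃ g ∈ reflGroup S, ∃ r ∈ S, g r = x}

/-- The 6 vertices of an octahedron: `(±1,0,0), (0,±1,0), (0,0,±1)`. -/
def Oct : Set E3 :=
  {x | ∃ a, pm a ∧ (x = vec3 a 0 0 ∨ x = vec3 0 a 0 ∨ x = vec3 0 0 a)}

/-- The 12 vertices of a cuboctahedron: `(1/√2)(±1,±1,0)` and permutations. -/
def Cuboct : Set E3 :=
  {x | ∃ a b, pm a ∧ pm b ∧
    (x = (Real.sqrt 2)⁻¹ • vec3 a b 0 ∨ x = (Real.sqrt 2)⁻¹ • vec3 a 0 b ∨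
      x = (Real.sqrt 2)⁻¹ • vec3 0 a b)}

/-- The golden ratio τ. -/
def gr : ℝ := (1 + Real.sqrt 5) / 2

/-- The Galois conjugate σ of the golden ratio. -/
def gs : ℝ := (1 - Real.sqrt 5) / 2

/-- The vertices `½(±τ,±1,±σ)` and all cyclic permutations of the coordinates. -/
def H3extra : Set E3 :=
  {x | ∃ a b c, pm a ∧ pm b ∧ pm c ∧
    (x = (2:ℝ)⁻¹ • vec3 (a * gr) b (c * gs) ∨ x = (2:ℝ)⁻¹ • vec3 (c * gs) (a * gr) b ∨
      x = (2:ℝ)⁻¹ • vec3 b (c * gs) (a * gr))}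

/-- The 30 vertices of an icosidodecahedron, the root system of H₃. -/
def Icosid : Set E3 := Oct ∪ H3extra

def qmk (a b c d : ℝ) : Quaternion ℝ := ⟨a, b, c, d⟩

/-- The 8 Lipschitz units `±1, ±i, ±j, ±k`. -/
def Lip : Set (Quaternion ℝ) :=
  {x | ∃ a, pm a ∧ (x = qmk a 0 0 0 ∨ x = qmk 0 a 0 0 ∨ x = qmk 0 0 a 0 ∨ x = qmk 0 0 0 a)}

/-- The 24 Hurwitz units: the Lipschitz units together with `½(±1 ± i ± j ± k)`. -/
def Hur : Set (Quaternion ℝ) :=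
  Lip ∪ {x | ∃ a b c d, pm a ∧ pm b ∧ pm c ∧ pm d ∧ x = qmk (a / 2) (b / 2) (c / 2) (d / 2)}

/-- The 24 `dual' quaternions `(1/√2)(±a ± b)` for distinct `a, b ∈ {1, i, j, k}`. -/
def DualHur : Set (Quaternion ℝ) :=
  {x | ∃ a b, pm a ∧ pm b ∧
    (x = qmk (a / Real.sqrt 2) (b / Real.sqrt 2) 0 0 ∨
      x = qmk (a / Real.sqrt 2) 0 (b / Real.sqrt 2) 0 ∨
      x = qmk (a / Real.sqrt 2) 0 0 (b / Real.sqrt 2) ∨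
      x = qmk 0 (a / Real.sqrt 2) (b / Real.sqrt 2) 0 ∨
      x = qmk 0 (a / Real.sqrt 2) 0 (b / Real.sqrt 2) ∨
      x = qmk 0 0 (a / Real.sqrt 2) (b / Real.sqrt 2))}

/-- The 48-element binary octahedral set. -/
def BinOct : Set (Quaternion ℝ) := Hur ∪ DualHur

/-- The coordinate quadruple of a quaternion. -/
def qcoords (x : Quaternion ℝ) : Fin 4 → ℝ := ![x.re, x.imI, x.imJ, x.imK]

/-- The 96 unit quaternions with coordinates `½(0, ±τ, ±1, ±σ)` and all even
permutations of the four coordinates. -/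
def IcoExtra : Set (Quaternion ℝ) :=
  {x | ∃ p ∈ alternatingGroup (Fin 4), ∃ a b c, pm a ∧ pm b ∧ pm c ∧
    ∀ i, qcoords x i = ![0, a * gr, b, c * gs] (p i) / 2}

/-- The 120 icosians. -/
def Icosians : Set (Quaternion ℝ) := Hur ∪ IcoExtra

/-- The map sending a vector of ℝ³ to the corresponding pure quaternion. -/
def iota (x : E3) : Quaternion ℝ := qmk 0 (x 0) (x 1) (x 2)

abbrev E4 := EuclideanSpace ℝ (Fin 4)

/-- Reflection in the hyperplane of ℝ⁴ orthogonal to `α`. -/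
def sRefl4 (α x : E4) : E4 := x - (2 * (⟪x, α⟫ / ⟪α, α⟫)) • α

/-- Regard a quaternion as a vector in ℝ⁴ via its coordinates. -/
def qvec (x : Quaternion ℝ) : E4 := WithLp.toLp 2 ![x.re, x.imI, x.imJ, x.imK]

open Quaternion Set

theorem Subgroup.val_image_closure_subset_of_mul_mem {M : Type*} [Monoid M] {s : Set Mˣ}
    {T : Set M} (hT : T.Finite) (h1 : 1 ∈ T) (hmul : ∀ x ∈ T, ∀ u ∈ s, x * ↑u ∈ T) :
    Units.val '' (closure s : Set Mˣ) ⊆ T := by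
  rintro _ ⟨v, hv, rfl⟩
  induction hv using Subgroup.closure_induction_right with
  | one => exact h1
  | mul_right x _ u hu hx => exact hmul _ hx u hu
  | mul_inv_cancel x _ u hu hx =>
    have hbij : BijOn (· * (u : M)) T T :=
      (hT.injOn_iff_bijOn_of_mapsTo fun y hy => hmul y hy u hu).1
        fun y _ z _ h => u.mul_left_inj.1 h
    obtain ⟨y, hy, hyx⟩ := hbij.surjOn hx
    simpa [← hyx] using hy

namespace List

variable {α : Type*} [DecidableEq α]

def reachStep (r : α → α → Prop) [DecidableRel r] (L R : List α) : List α :=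
  R ++ L.filter fun z => z ∉ R ∧ ∃ x ∈ R, r x z

theorem forall_mem_iterate_reachStep {r : α → α → Prop} [DecidableRel r] {P : α → Prop}
    (hr : ∀ x z, P x → r x z → P z) {L R : List α} (hR : ∀ x ∈ R, P x) (n : ℕ) :
    ∀ z ∈ (reachStep r L)^[n] R, P z := by
  induction n with
  | zero => exact hR
  | succ n ih =>
    intro z hz
    rw [Function.iterate_succ_apply', reachStep, mem_append, mem_filter] at hz
    obtain hz | ⟨-, hz⟩ := hz
    · exact ih z hz
    · obtain ⟨-, x, hx, hxz⟩ := by simpa using hz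
      exact hr x z (ih x hx) hxz

end List

namespace Quaternion

variable {R S : Type*} [CommRing R] [CommRing S]

instance [DecidableEq R] : DecidableEq ℍ[R] := fun x y =>
  decidable_of_iff (x.re = y.re ∧ x.imI = y.imI ∧ x.imJ = y.imJ ∧ x.imK = y.imK)
    Quaternion.ext_iff.symm

@[simps]
def ofCoeffs (a b c d : R) : ℍ[R] := ⟨a, b, c, d⟩

@[simps]
def map (f : R →+* S) : ℍ[R] →+* ℍ[S] where
  toFun x := ofCoeffs (f x.re) (f x.imI) (f x.imJ) (f x.imK)
  map_one' := by ext <;> simp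
  map_mul' x y := by ext <;> simp
  map_zero' := by ext <;> simp
  map_add' x y := by ext <;> simp

end Quaternion

theorem qmk_eq_ofCoeffs : qmk = ofCoeffs := rfl

theorem eq_iff_forall_qcoords_eq {x y : Quaternion ℝ} :
    x = y ↔ ∀ i, qcoords x i = qcoords y i := by
  refine ⟨fun h _ => h ▸ rfl, fun h => ?_⟩
  ext
  exacts [h 0, h 1, h 2, h 3]

open QuadraticAlgebra Real

abbrev GoldenInt := QuadraticAlgebra ℤ 1 1

local notation "τ" => (ω : GoldenInt)

def goldenToReal : GoldenInt →+* ℝ :=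
  (QuadraticAlgebra.lift ⟨goldenRatio, by simp [← sq, goldenRatio_sq, add_comm]⟩).toRingHom

theorem goldenToReal_omega : goldenToReal τ = gr := by simp [goldenToReal, gr]

theorem one_sub_gr : 1 - gr = gs := one_sub_goldenConj

def halfToReal (X : ℍ[GoldenInt]) : ℍ[ℝ] := (2⁻¹ : ℝ) • Quaternion.map goldenToReal X

theorem halfToReal_ofCoeffs (a b c d : GoldenInt) :
    halfToReal (ofCoeffs a b c d) =
      qmk (goldenToReal a / 2) (goldenToReal b / 2) (goldenToReal c / 2) (goldenToReal d / 2) := by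
  ext <;> simp [halfToReal, qmk, div_eq_inv_mul]

theorem halfToReal_two : halfToReal 2 = 1 := by
  rw [halfToReal, map_ofNat, inv_smul_eq_iff₀ two_ne_zero, two_smul, one_add_one_eq_two]

theorem halfToReal_mul_of_eq_two_nsmul {X Y Z : ℍ[GoldenInt]} (h : X * Y = 2 • Z) :
    halfToReal X * halfToReal Y = halfToReal Z := by
  rw [halfToReal, halfToReal, halfToReal, smul_mul_smul_comm, ← map_mul, h, map_nsmul,
    ← Nat.cast_smul_eq_nsmul ℝ, smul_smul]
  norm_num

def IsHalfProduct (gens : List ℍ[GoldenInt]) (X Z : ℍ[GoldenInt]) : Prop :=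
  ∃ G ∈ gens, X * G = 2 • Z

instance (gens : List ℍ[GoldenInt]) : DecidableRel (IsHalfProduct gens) := fun _ _ =>
  inferInstanceAs (Decidable (∃ G ∈ gens, _))

theorem val_image_closure_eq_halfToReal_image {gens L : List ℍ[GoldenInt]} {n : ℕ}
    (hgens : ∀ G ∈ gens, halfToReal G ≠ 0) (h2 : 2 ∈ L)
    (hmul : ∀ X ∈ L, ∀ G ∈ gens, ∃ Z ∈ L, X * G = 2 • Z)
    (hreach : ∀ Z ∈ L, Z ∈ (List.reachStep (IsHalfProduct gens) L)^[n] [2]) :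
    Units.val '' (Subgroup.closure {u : ℍ[ℝ]ˣ | ∃ G ∈ gens, ↑u = halfToReal G} : Set ℍ[ℝ]ˣ) =
      halfToReal '' {X | X ∈ L} := by
  apply subset_antisymm
  · refine Subgroup.val_image_closure_subset_of_mul_mem (L.finite_toSet.image _)
      ⟨2, h2, halfToReal_two⟩ ?_
    rintro _ ⟨X, hX, rfl⟩ u ⟨G, hG, hu⟩
    obtain ⟨Z, hZ, hXZ⟩ := hmul X hX G hG
    exact ⟨Z, hZ, by rw [hu, halfToReal_mul_of_eq_two_nsmul hXZ]⟩
  · rintro _ ⟨Z, hZ, rfl⟩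
    refine List.forall_mem_iterate_reachStep (P := fun X => halfToReal X ∈ _) ?_ ?_ n Z
      (hreach Z hZ)
    · rintro X Z ⟨v, hv, hvX⟩ ⟨G, hG, hXZ⟩
      let u : ℍ[ℝ]ˣ := Units.mk0 (halfToReal G) (hgens G hG)
      refine ⟨v * u, mul_mem hv (Subgroup.subset_closure ⟨G, hG, rfl⟩), ?_⟩
      rw [Units.val_mul, hvX, Units.val_mk0, halfToReal_mul_of_eq_two_nsmul hXZ]
    · simpa using ⟨1, one_mem _, halfToReal_two.symm⟩

def signs : List ℤ := [1, -1]

theorem pm_iff_exists_mem_signs {a : ℝ} : pm a ↔ ∃ ε ∈ signs, (ε : ℝ) = a := by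
  simp [pm, signs, eq_comm]

theorem pm_of_mem_signs {ε : ℤ} (h : ε ∈ signs) : pm ε := pm_iff_exists_mem_signs.2 ⟨ε, h, rfl⟩

-- the powers of the 3-cycle `c` represent the cosets of the Klein four-group in `A₄`
def evenPerms : List (Equiv.Perm (Fin 4)) :=
  let c := Equiv.swap 1 2 * Equiv.swap 2 3
  [1, c, c * c].flatMap fun r =>
    [1, Equiv.swap 0 1 * Equiv.swap 2 3, Equiv.swap 0 2 * Equiv.swap 1 3,
      Equiv.swap 0 3 * Equiv.swap 1 2].map (r * ·)

theorem mem_evenPerms_iff {p : Equiv.Perm (Fin 4)} :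
    p ∈ evenPerms ↔ p ∈ alternatingGroup (Fin 4) := by
  rw [Equiv.Perm.mem_alternatingGroup]
  revert p
  decide +kernel

def doubledLip : List ℍ[GoldenInt] :=
  signs.flatMap fun a => [ofCoeffs (2 * a) 0 0 0, ofCoeffs 0 (2 * a) 0 0, ofCoeffs 0 0 (2 * a) 0,
    ofCoeffs 0 0 0 (2 * a)]

def doubledHalf : List ℍ[GoldenInt] :=
  signs.flatMap fun a => signs.flatMap fun b => signs.flatMap fun c => signs.map fun d =>
    ofCoeffs a b c d

def doubledExtraOf (p : Equiv.Perm (Fin 4)) (a b c : ℤ) : ℍ[GoldenInt] :=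
  let v : Fin 4 → GoldenInt := ![0, a * τ, b, c * (1 - τ)]
  ofCoeffs (v (p 0)) (v (p 1)) (v (p 2)) (v (p 3))

def doubledExtra : List ℍ[GoldenInt] :=
  evenPerms.flatMap fun p => signs.flatMap fun a => signs.flatMap fun b => signs.map fun c =>
    doubledExtraOf p a b c

def doubledIcosians : List ℍ[GoldenInt] := doubledLip ++ doubledHalf ++ doubledExtra

theorem qcoords_halfToReal_doubledExtraOf (p : Equiv.Perm (Fin 4)) (a b c : ℤ) (i : Fin 4) :
    qcoords (halfToReal (doubledExtraOf p a b c)) i = ![0, a * gr, b, c * gs] (p i) / 2 := by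
  have hv : ∀ j, goldenToReal (![0, a * τ, b, c * (1 - τ)] j : GoldenInt) =
      ![0, a * gr, b, c * gs] j := by
    intro j
    fin_cases j <;> simp [goldenToReal_omega, one_sub_gr]
  fin_cases i <;> simp [doubledExtraOf, halfToReal_ofCoeffs, qmk_eq_ofCoeffs, qcoords, hv]

theorem halfToReal_image_doubledLip : halfToReal '' {X | X ∈ doubledLip} = Lip := by
  ext x
  simp only [Set.mem_image, Set.mem_ofPred_eq, ← List.mem_map]
  simp [doubledLip, List.map_flatMap, Lip, map_ofNat, pm_iff_exists_mem_signs,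
    halfToReal_ofCoeffs, qmk_eq_ofCoeffs, eq_comm]

theorem halfToReal_image_doubledHalf :
    halfToReal '' {X | X ∈ doubledHalf} =
      {x | ∃ a b c d, pm a ∧ pm b ∧ pm c ∧ pm d ∧ x = qmk (a / 2) (b / 2) (c / 2) (d / 2)} := by
  ext x
  simp [doubledHalf, pm_iff_exists_mem_signs, halfToReal_ofCoeffs, qmk_eq_ofCoeffs, eq_comm,
    and_assoc]

theorem halfToReal_image_doubledExtra : halfToReal '' {X | X ∈ doubledExtra} = IcoExtra := by
  ext x
  simp only [Set.mem_image, Set.mem_ofPred_eq, doubledExtra, List.mem_flatMap, List.mem_map]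
  constructor
  · rintro ⟨_, ⟨p, hp, a, ha, b, hb, c, hc, rfl⟩, rfl⟩
    exact ⟨p, mem_evenPerms_iff.1 hp, a, b, c, pm_of_mem_signs ha, pm_of_mem_signs hb,
      pm_of_mem_signs hc, qcoords_halfToReal_doubledExtraOf p a b c⟩
  · rintro ⟨p, hp, a, b, c, ha, hb, hc, hx⟩
    obtain ⟨ε₁, hε₁, rfl⟩ := pm_iff_exists_mem_signs.1 ha
    obtain ⟨ε₂, hε₂, rfl⟩ := pm_iff_exists_mem_signs.1 hb
    obtain ⟨ε₃, hε₃, rfl⟩ := pm_iff_exists_mem_signs.1 hc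
    refine ⟨doubledExtraOf p ε₁ ε₂ ε₃,
      ⟨p, mem_evenPerms_iff.2 hp, ε₁, hε₁, ε₂, hε₂, ε₃, hε₃, rfl⟩, ?_⟩
    rw [eq_iff_forall_qcoords_eq]
    intro i
    rw [hx, qcoords_halfToReal_doubledExtraOf]

theorem halfToReal_image_doubledIcosians :
    halfToReal '' {X | X ∈ doubledIcosians} = Icosians := by
  simp only [doubledIcosians, List.mem_append, Set.ofPred_or, Set.image_union,
    halfToReal_image_doubledLip, halfToReal_image_doubledHalf, halfToReal_image_doubledExtra]
  rfl

def spinorGen₁ : ℍ[GoldenInt] := ofCoeffs τ 0 (1 - τ) (-1)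

def spinorGen₂ : ℍ[GoldenInt] := ofCoeffs (1 - τ) (-1) τ 0

theorem halfToReal_spinorGen₁ :
    halfToReal spinorGen₁ = iota (vec3 (-1) 0 0) * iota ((2:ℝ)⁻¹ • vec3 gr 1 gs) := by
  ext <;> simp [spinorGen₁, halfToReal_ofCoeffs, qmk_eq_ofCoeffs, iota, vec3, goldenToReal_omega,
    one_sub_gr] <;> ring

theorem halfToReal_spinorGen₂ :
    halfToReal spinorGen₂ = iota ((2:ℝ)⁻¹ • vec3 gr 1 gs) * iota (vec3 0 0 (-1)) := by
  ext <;> simp [spinorGen₂, halfToReal_ofCoeffs, qmk_eq_ofCoeffs, iota, vec3, goldenToReal_omega,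
    one_sub_gr] <;> ring

theorem halfToReal_spinorGen_ne_zero : ∀ G ∈ [spinorGen₁, spinorGen₂], halfToReal G ≠ 0 := by
  simp only [List.mem_cons, List.not_mem_nil, or_false, forall_eq_or_imp, forall_eq]
  constructor <;> intro h
  · simpa [spinorGen₁, halfToReal_ofCoeffs, qmk_eq_ofCoeffs] using congrArg QuaternionAlgebra.imK h
  · simpa [spinorGen₂, halfToReal_ofCoeffs, qmk_eq_ofCoeffs] using congrArg QuaternionAlgebra.imI h

theorem two_mem_doubledIcosians : (2 : ℍ[GoldenInt]) ∈ doubledIcosians := by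
  decide +kernel

theorem doubledIcosians_mul_spinorGen :
    ∀ X ∈ doubledIcosians, ∀ G ∈ [spinorGen₁, spinorGen₂],
      ∃ Z ∈ doubledIcosians, X * G = 2 • Z := by
  decide +kernel

theorem doubledIcosians_reachable :
    ∀ Z ∈ doubledIcosians,
      Z ∈ (List.reachStep (IsHalfProduct [spinorGen₁, spinorGen₂]) doubledIcosians)^[9] [2] := by
  decide +kernel

/-- The subgroup of the multiplicative group of the real quaternions generated by the two
spinor generators `R₁ = ι(α₁)ι(α₂)` and `R₂ = ι(α₂)ι(α₃)`, where `α₁ = (−1,0,0)`,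
`α₂ = ½(τ,1,σ)`, `α₃ = (0,0,−1)` are the simple roots of `H₃`, is exactly the 120-element
set of icosians (the binary icosahedral group, the root system of `H₄`). -/
theorem H3_spinor_generators_generate_icosians :
    Units.val '' ((Subgroup.closure
        {u : (Quaternion ℝ)ˣ |
          (u : Quaternion ℝ) = iota (vec3 (-1) 0 0) * iota ((2:ℝ)⁻¹ • vec3 gr 1 gs) ∨
          (u : Quaternion ℝ) = iota ((2:ℝ)⁻¹ • vec3 gr 1 gs) * iota (vec3 0 0 (-1))} :
        Subgroup (Quaternion ℝ)ˣ) : Set (Quaternion ℝ)ˣ) = Icosians := by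
  have hgens : {u : (Quaternion ℝ)ˣ |
      (u : Quaternion ℝ) = iota (vec3 (-1) 0 0) * iota ((2:ℝ)⁻¹ • vec3 gr 1 gs) ∨
      (u : Quaternion ℝ) = iota ((2:ℝ)⁻¹ • vec3 gr 1 gs) * iota (vec3 0 0 (-1))} =
      {u : (Quaternion ℝ)ˣ | ∃ G ∈ [spinorGen₁, spinorGen₂], ↑u = halfToReal G} := by
    simp [halfToReal_spinorGen₁, halfToReal_spinorGen₂]
  rw [hgens, ← halfToReal_image_doubledIcosians]
  exact val_image_closure_eq_halfToReal_image halfToReal_spinorGen_ne_zero two_mem_doubledIcosians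
    doubledIcosians_mul_spinorGen doubledIcosians_reachable
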